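/- arXiv:1605.00076 — 2 statements merged into one kernel-verified Lean document; each statement's English description precedes it below -/
import Mathlib

section
/- Under assumptions (A1)-(A3), the iterates generated by the asynchronous proximal ADMM converge in the following sense: for every node k, lim_{t→∞} ‖z_k^{t+1} − z_k^t‖ = 0; for every node k and every j ∈ N_k, lim_{t→∞} ‖x_{kj}^{t+1} − x_{kj}^t‖ = 0 and lim_{t→∞} ‖y_{kj}^{t+1} − y_{kj}^t‖ = 0; moreover lim_{t→∞} ‖x_{kj}^t − z_j^t‖ = 0 for every k and every j ∈ N_k. -/
open Filter Topology RealInnerProductSpace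

noncomputable section

/-- Zero-padded restriction of a vector of nodal variables to a neighborhood:
coordinates outside the neighborhood are set to zero. -/
def restr {K : ℕ} (Nk : Finset (Fin K)) (v : Fin K → ℝ) : EuclideanSpace ℝ (Fin K) :=
  WithLp.toLp 2 (fun j => if j ∈ Nk then v j else 0)

/-- The setting of the asynchronous proximal ADMM: network data, assumptions
(A1)-(A2), and the algorithmic update equations (i)-(iii) together with the
delay bounds and the update-frequency condition. -/
structure ProxADMM (K : ℕ) where
  /-- neighborhoods, `j ∈ Nb k` means `j ∈ N_k` -/
  Nb : Fin K → Finset (Fin K)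
  self_mem : ∀ k, k ∈ Nb k
  symm : ∀ k j, j ∈ Nb k ↔ k ∈ Nb j
  /-- local cost of node `k`, as a function of the zero-padded neighborhood variables -/
  g : Fin K → EuclideanSpace ℝ (Fin K) → ℝ
  g_local : ∀ k v w, (∀ j ∈ Nb k, v j = w j) → g k v = g k w
  /-- the Lipschitz constants of (A1) -/
  L : Fin K → ℝ
  L_pos : ∀ k, 0 < L k
  g_diff : ∀ k, Differentiable ℝ (g k)
  /-- (A1): the gradient of `g k` is `L k`-Lipschitz -/
  g_grad_lip : ∀ k v w, ‖gradient (g k) v - gradient (g k) w‖ ≤ L k * ‖v - w‖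
  /-- the convex nonsmooth part -/
  h : Fin K → ℝ → ℝ
  h_convex : ∀ k, ConvexOn ℝ Set.univ (h k)
  /-- the constraint sets -/
  Xs : Fin K → Set ℝ
  Xs_nonempty : ∀ k, (Xs k).Nonempty
  Xs_compact : ∀ k, IsCompact (Xs k)
  Xs_convex : ∀ k, Convex ℝ (Xs k)
  /-- (A2): `g k` is bounded below over the constraint set -/
  g_bddBelow : ∀ k, ∃ b, ∀ v : Fin K → ℝ, (∀ j, v j ∈ Xs j) → b ≤ g k (restr (Nb k) v)
  /-- penalty parameters -/
  ρ : Fin K → ℝ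
  ρ_pos : ∀ k, 0 < ρ k
  /-- update frequencies `f_k` -/
  freq : Fin K → ℝ
  freq_pos : ∀ k, 0 < freq k
  freq_le_one : ∀ k, freq k ≤ 1
  /-- maximum delays `T_k` -/
  Td : Fin K → ℕ
  /-- updating sets `S^t` -/
  Sset : ℕ → Finset (Fin K)
  /-- delayed index: `τ t k = [t+1]_k` -/
  τ : ℕ → Fin K → ℕ
  τ_le : ∀ t k, τ t k ≤ t + 1
  τ_ge : ∀ t k, t + 1 ≤ τ t k + Td k
  /-- iterates -/
  x : ℕ → Fin K → Fin K → ℝ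
  z : ℕ → Fin K → ℝ
  y : ℕ → Fin K → Fin K → ℝ
  z_init_mem : ∀ j, z 0 j ∈ Xs j
  /-- (i): feasibility of the `z`-update -/
  z_update_mem : ∀ t j, j ∈ Sset t → z (t + 1) j ∈ Xs j
  /-- (i): for `j ∈ S^t`, `z_j^{t+1}` minimizes the `j`-th block over `X_j` -/
  z_update_min : ∀ t j, j ∈ Sset t → IsMinOn
      (fun w => h j w + ∑ k ∈ Nb j, (y t k j * (x t k j - w) + ρ k / 2 * (x t k j - w) ^ 2))
      (Xs j) (z (t + 1) j)
  /-- (i): non-updating nodes keep their old value -/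
  z_noupdate : ∀ t j, j ∉ Sset t → z (t + 1) j = z t j
  /-- (ii): proximal (linearized) `x`-update with delayed gradient -/
  x_update : ∀ t k, ∀ j ∈ Nb k,
      x (t + 1) k j = z (t + 1) j
        - (1 / ρ k) * (gradient (g k) (restr (Nb k) (z (τ t k))) j + y t k j)
  /-- (iii): dual update -/
  y_update : ∀ t k, ∀ j ∈ Nb k,
      y (t + 1) k j = y t k j + ρ k * (x (t + 1) k j - z (t + 1) j)
  /-- in any window of `T` consecutive iterations node `k` updates at least `f_k T` times -/
  update_freq : ∀ k (t₀ T : ℕ),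
      freq k * T ≤ ((Finset.Ico t₀ (t₀ + T)).filter (fun t => k ∈ Sset t)).card

/-- The augmented Lagrangian. -/
def ProxADMM.Lag {K : ℕ} (P : ProxADMM K) (xx : Fin K → Fin K → ℝ) (zz : Fin K → ℝ)
    (yy : Fin K → Fin K → ℝ) : ℝ :=
  ∑ k, (P.g k (restr (P.Nb k) (xx k)) + P.h k (zz k)
    + ∑ j ∈ P.Nb k, (yy k j * (xx k j - zz j) + P.ρ k / 2 * (xx k j - zz j) ^ 2))

end


/-!
The augmented Lagrangian along the iterates is a Lyapunov function up to delay errors. The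
`z`-update decreases it by `(∑_{k ∈ N_j} ρ_k)/2 ‖z_j^{t+1} - z_j^t‖²` (strong convexity of the
block objective), the linearized `x`-update raises it by at most the staleness of the gradient
plus `3 L_k ‖x_k - z_k‖²`, and the dual update adds `ρ_k ‖x_k - z_k‖²`. The `x`- and `y`-updates
together force `y_k^{t+1} = -∇g_k(z_k^{[t+1]_k})`, so the gradient staleness and the primal residual
are both Lipschitz-controlled by increments of `z_k` over windows of length `T_k + 1`. Summing over
`t`, each window is counted at most `T_k + 1` times, and (A3) makes the resulting coefficient
smaller than `ρ_k / 2`. As the Lagrangian is bounded below on the compact feasible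
set, `∑_t ‖z_k^{t+1} - z_k^t‖²` is finite, and every other difference is bounded by increments of
`z` over bounded windows.
-/

open Finset

theorem IsMinOn.add_sq_le_of_strongConvexOn {E : Type*} [NormedAddCommGroup E] [NormedSpace ℝ E]
    {s : Set E} {m : ℝ} {f : E → ℝ} {x y : E} (hf : StrongConvexOn s m f) (hmin : IsMinOn f s x)
    (hx : x ∈ s) (hy : y ∈ s) : f x + m / 2 * ‖y - x‖ ^ 2 ≤ f y := by
  have key : ∀ b ∈ Set.Ioc (0 : ℝ) 1,
      f x + m / 2 * ‖y - x‖ ^ 2 ≤ f y + b * (m / 2 * ‖y - x‖ ^ 2) := by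
    rintro b ⟨hb0, hb1⟩
    have hconv := hf.2 hx hy (sub_nonneg.2 hb1) hb0.le (by ring)
    have hle : f x ≤ f ((1 - b) • x + b • y) :=
      hmin (hf.1 hx hy (sub_nonneg.2 hb1) hb0.le (by ring))
    rw [norm_sub_rev, smul_eq_mul, smul_eq_mul] at hconv
    beta_reduce at hconv
    refine le_of_mul_le_mul_left ?_ hb0
    linarith
  have hlim : Tendsto (fun b : ℝ => f y + b * (m / 2 * ‖y - x‖ ^ 2)) (𝓝[>] 0)
      (𝓝 (f y + 0 * (m / 2 * ‖y - x‖ ^ 2))) :=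
    tendsto_nhdsWithin_of_tendsto_nhds ((by fun_prop : Continuous _).tendsto 0)
  simpa using ge_of_tendsto hlim (mem_of_superset (Ioc_mem_nhdsGT one_pos) key)

theorem mul_le_sq_div_add_mul_sq {a b c : ℝ} (hc : 0 < c) :
    a * b ≤ a ^ 2 / (2 * c) + c / 2 * b ^ 2 := by
  rw [div_add' _ _ _ (by positivity), le_div_iff₀ (by positivity)]
  nlinarith [sq_nonneg (a - c * b)]

section SmoothFunction

variable {E : Type*} [NormedAddCommGroup E] [InnerProductSpace ℝ E] [CompleteSpace E]
  {f : E → ℝ} {L ρ : ℝ}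

theorem abs_sub_sub_inner_gradient_le (hf : Differentiable ℝ f) (hL : 0 ≤ L)
    (hlip : ∀ v w, ‖gradient f v - gradient f w‖ ≤ L * ‖v - w‖) (v w : E) :
    |f w - f v - ⟪gradient f v, w - v⟫| ≤ L * ‖w - v‖ ^ 2 := by
  have hbound : ∀ u ∈ segment ℝ v w, ‖fderiv ℝ f u - fderiv ℝ f v‖ ≤ L * ‖w - v‖ := by
    intro u hu
    rw [← toDual_gradient, ← toDual_gradient, ← map_sub, LinearIsometryEquiv.norm_map]
    exact (hlip u v).trans (mul_le_mul_of_nonneg_left (norm_sub_le_of_mem_segment hu) hL)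
  have := (convex_segment v w).norm_image_sub_le_of_norm_fderiv_le' (fun u _ => hf u) hbound
    (left_mem_segment ℝ v w) (right_mem_segment ℝ v w)
  rw [← toDual_gradient, InnerProductSpace.toDual_apply_apply] at this
  rwa [← Real.norm_eq_abs, sq, ← mul_assoc]

theorem sub_sq_div_le_sub_inner_add_sq (hf : Differentiable ℝ f) (hL : 0 ≤ L)
    (hlip : ∀ v w, ‖gradient f v - gradient f w‖ ≤ L * ‖v - w‖) (hρ : 2 * L < ρ) (x z d : E) :
    f z - ‖gradient f z - d‖ ^ 2 / (2 * (ρ - 2 * L)) ≤ f x - ⟪d, x - z⟫ + ρ / 2 * ‖x - z‖ ^ 2 := by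
  have htaylor := (abs_le.1 (abs_sub_sub_inner_gradient_le hf hL hlip z x)).1
  have hcs : ⟪gradient f z - d, z - x⟫ ≤ ‖gradient f z - d‖ * ‖x - z‖ := by
    rw [← norm_neg (x - z), neg_sub]
    exact real_inner_le_norm _ _
  have hyoung := mul_le_sq_div_add_mul_sq (a := ‖gradient f z - d‖) (b := ‖x - z‖)
    (by linarith : 0 < ρ - 2 * L)
  rw [← neg_sub x z, inner_neg_right, inner_sub_left] at hcs
  linarith

theorem prox_step_le (hf : Differentiable ℝ f) (hL : 0 ≤ L)
    (hlip : ∀ v w, ‖gradient f v - gradient f w‖ ≤ L * ‖v - w‖) (hρ : 4 * L < ρ)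
    {a b z d y : E} (ha : a = z - ρ⁻¹ • (d + y)) :
    f a + ⟪y, a - z⟫ + ρ / 2 * ‖a - z‖ ^ 2
      ≤ f b + ⟪y, b - z⟫ + ρ / 2 * ‖b - z‖ ^ 2
        + ‖gradient f z - d‖ ^ 2 / (2 * (ρ - 4 * L)) + 3 * L * ‖a - z‖ ^ 2 := by
  have hρ0 : ρ ≠ 0 := by linarith
  have hta := (abs_le.1 (abs_sub_sub_inner_gradient_le hf hL hlip z a)).2
  have htb := (abs_le.1 (abs_sub_sub_inner_gradient_le hf hL hlip z b)).1
  set G := gradient f z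
  have hbz : b - z = (a - z) + (b - a) := by abel
  have hyb : ⟪y, b - z⟫ = ⟪y, a - z⟫ + ⟪y, b - a⟫ := by rw [hbz, inner_add_right]
  have hGb : ⟪G, b - z⟫ = ⟪G, a - z⟫ + ⟪G, b - a⟫ := by rw [hbz, inner_add_right]
  -- the optimality condition of the linearized proximal step
  have hopt : ρ * ⟪a - z, b - a⟫ = -⟪d, b - a⟫ - ⟪y, b - a⟫ := by
    rw [ha, sub_sub_cancel_left, ← real_inner_smul_left, smul_neg, smul_inv_smul₀ hρ0,
      inner_neg_left, inner_add_left]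
    ring
  have hcs : ⟪d - G, b - a⟫ ≤ ‖G - d‖ * ‖b - a‖ := by
    rw [← norm_neg (G - d), neg_sub]
    exact real_inner_le_norm _ _
  have hyoung := mul_le_sq_div_add_mul_sq (a := ‖G - d‖) (b := ‖b - a‖)
    (by linarith : 0 < ρ - 4 * L)
  have hcross : 2 * ⟪a - z, b - a⟫ ≤ ‖a - z‖ ^ 2 + ‖b - a‖ ^ 2 := by
    nlinarith [real_inner_le_norm (a - z) (b - a), sq_nonneg (‖a - z‖ - ‖b - a‖)]
  have hnorm : ‖b - z‖ ^ 2 = ‖a - z‖ ^ 2 + 2 * ⟪a - z, b - a⟫ + ‖b - a‖ ^ 2 := by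
    rw [hbz, norm_add_sq_real]
  have hρnorm : ρ / 2 * ‖b - z‖ ^ 2
      = ρ / 2 * ‖a - z‖ ^ 2 + ρ * ⟪a - z, b - a⟫ + ρ / 2 * ‖b - a‖ ^ 2 := by
    rw [hnorm]; ring
  have hLnorm : L * ‖b - z‖ ^ 2 ≤ L * (2 * ‖a - z‖ ^ 2 + 2 * ‖b - a‖ ^ 2) :=
    mul_le_mul_of_nonneg_left (by linarith) hL
  rw [inner_sub_left] at hcs
  linarith

end SmoothFunction

theorem norm_sub_sq_le_mul_sum_window {E : Type*} [SeminormedAddCommGroup E] (F : ℕ → E)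
    {a b u w : ℕ} (ha : a ≤ u) (ha' : u ≤ a + w) (hb : b ≤ u) (hb' : u ≤ b + w) :
    ‖F a - F b‖ ^ 2 ≤ w * ∑ s ∈ Ico (u - w) u, ‖F (s + 1) - F s‖ ^ 2 := by
  wlog hba : b ≤ a generalizing a b
  · rw [norm_sub_rev]; exact this hb hb' ha ha' (by omega)
  have hsum : ‖F a - F b‖ ≤ ∑ s ∈ Ico (u - w) u, ‖F (s + 1) - F s‖ := by
    calc ‖F a - F b‖ = dist (F b) (F a) := by rw [dist_comm, dist_eq_norm]
      _ ≤ ∑ s ∈ Ico b a, dist (F s) (F (s + 1)) := dist_le_Ico_sum_dist F hba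
      _ ≤ ∑ s ∈ Ico (u - w) u, dist (F s) (F (s + 1)) :=
        sum_le_sum_of_subset_of_nonneg (Ico_subset_Ico (by omega) ha) fun _ _ _ => dist_nonneg
      _ = ∑ s ∈ Ico (u - w) u, ‖F (s + 1) - F s‖ := by simp only [dist_eq_norm, norm_sub_rev]
  calc ‖F a - F b‖ ^ 2 ≤ (∑ s ∈ Ico (u - w) u, ‖F (s + 1) - F s‖) ^ 2 :=
        pow_le_pow_left₀ (norm_nonneg _) hsum 2
    _ ≤ #(Ico (u - w) u) * ∑ s ∈ Ico (u - w) u, ‖F (s + 1) - F s‖ ^ 2 :=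
        sq_sum_le_card_mul_sum_sq
    _ ≤ w * ∑ s ∈ Ico (u - w) u, ‖F (s + 1) - F s‖ ^ 2 := by
        gcongr
        rw [Nat.card_Ico]
        exact_mod_cast (by omega : u - (u - w) ≤ w)

theorem sum_window_eq_sum_range {M : Type*} [AddCommMonoid M] (a : ℕ → M) {w t : ℕ}
    (h : w ≤ t + 1) : ∑ s ∈ Ico (t + 1 - w) (t + 1), a s = ∑ j ∈ range w, a (t - j) := by
  rw [range_eq_Ico, sum_Ico_reflect a 0 h, Nat.sub_zero]

theorem sum_Ico_sum_window_le {a : ℕ → ℝ} (ha : ∀ s, 0 ≤ a s) {w m : ℕ} (hw : w ≤ m + 1)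
    (N : ℕ) : ∑ t ∈ Ico m N, ∑ s ∈ Ico (t + 1 - w) (t + 1), a s ≤ w * ∑ s ∈ range N, a s := by
  have hshift : ∀ j ∈ range w, ∑ t ∈ Ico m N, a (t - j) ≤ ∑ s ∈ range N, a s := by
    intro j hj
    rw [mem_range] at hj
    rw [← sum_image (g := (· - j)) fun t ht t' ht' h => by
      simp only [coe_Ico, Set.mem_Ico] at ht ht' h; omega]
    refine sum_le_sum_of_subset_of_nonneg (fun s hs => ?_) fun s _ _ => ha s
    simp only [mem_image, mem_Ico] at hs
    obtain ⟨t, ht, rfl⟩ := hs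
    simp only [mem_range]; omega
  calc ∑ t ∈ Ico m N, ∑ s ∈ Ico (t + 1 - w) (t + 1), a s
      = ∑ t ∈ Ico m N, ∑ j ∈ range w, a (t - j) :=
        sum_congr rfl fun t ht => sum_window_eq_sum_range a (by simp only [mem_Ico] at ht; omega)
    _ = ∑ j ∈ range w, ∑ t ∈ Ico m N, a (t - j) := sum_comm
    _ ≤ ∑ _j ∈ range w, ∑ s ∈ range N, a s := sum_le_sum hshift
    _ = w * ∑ s ∈ range N, a s := by rw [sum_const, card_range, nsmul_eq_mul]

theorem tendsto_sum_window {a : ℕ → ℝ} (ha : Tendsto a atTop (𝓝 0)) (w : ℕ) :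
    Tendsto (fun t => ∑ s ∈ Ico (t + 1 - w) (t + 1), a s) atTop (𝓝 0) := by
  have hterms : Tendsto (fun t => ∑ j ∈ range w, a (t - j)) atTop (𝓝 0) := by
    simpa using tendsto_finsetSum (range w) fun j _ => ha.comp (tendsto_sub_atTop_nat j)
  refine hterms.congr' ?_
  filter_upwards [eventually_ge_atTop w] with t ht
  exact (sum_window_eq_sum_range a (by omega)).symm

theorem tendsto_norm_apply {ι : Type*} [Fintype ι] {f : ℕ → EuclideanSpace ℝ ι}
    (h : Tendsto (fun t => ‖f t‖) atTop (𝓝 0)) (j : ι) :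
    Tendsto (fun t => ‖f t j‖) atTop (𝓝 0) :=
  squeeze_zero (fun _ => norm_nonneg _) (fun t => PiLp.norm_apply_le (f t) j) h

theorem summable_of_descent_of_sum_le {ι : Type*} [Fintype ι] {V : ℕ → ℝ} {a E : ι → ℕ → ℝ}
    {d c : ι → ℝ} {m : ℕ} (hV : BddBelow (Set.range V)) (ha : ∀ i t, 0 ≤ a i t)
    (hcd : ∀ i, c i < d i)
    (hdesc : ∀ t, m ≤ t → V (t + 1) + ∑ i, d i * a i t ≤ V t + ∑ i, E i t)
    (hE : ∀ i N, ∑ t ∈ Ico m N, E i t ≤ c i * ∑ s ∈ range N, a i s) (i : ι) :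
    Summable (a i) := by
  obtain ⟨B, hB⟩ := hV
  set C := V m - B + ∑ i, c i * ∑ s ∈ range m, a i s
  have hbound : ∀ n, ∑ i, (d i - c i) * ∑ t ∈ Ico m (m + n), a i t ≤ C := by
    intro n
    have htel : ∑ t ∈ Ico m (m + n), (V t - V (t + 1)) = V m - V (m + n) := by
      rw [sum_Ico_eq_sum_range, Nat.add_sub_cancel_left]
      simpa [add_assoc] using sum_range_sub' (fun j => V (m + j)) n
    have hsplit : ∀ i, ∑ s ∈ range (m + n), a i s
        = ∑ s ∈ range m, a i s + ∑ t ∈ Ico m (m + n), a i t := fun i => by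
      rw [range_eq_Ico, range_eq_Ico, sum_Ico_consecutive _ (Nat.zero_le m) (Nat.le_add_right m n)]
    have hdescSum : ∑ i, d i * ∑ t ∈ Ico m (m + n), a i t
        ≤ V m - V (m + n) + ∑ i, ∑ t ∈ Ico m (m + n), E i t := by
      have := sum_le_sum fun t (ht : t ∈ Ico m (m + n)) => hdesc t (mem_Ico.1 ht).1
      simp only [sum_add_distrib, sum_comm (s := Ico m (m + n)), ← mul_sum] at this
      rw [sum_sub_distrib] at htel
      linarith
    have hESum : ∑ i, ∑ t ∈ Ico m (m + n), E i t
        ≤ ∑ i, c i * (∑ s ∈ range m, a i s + ∑ t ∈ Ico m (m + n), a i t) :=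
      sum_le_sum fun i _ => (hE i (m + n)).trans_eq (by rw [hsplit])
    have hVB : B ≤ V (m + n) := hB ⟨m + n, rfl⟩
    simp only [sub_mul, mul_add, sum_sub_distrib, sum_add_distrib] at hESum ⊢
    linarith
  have hdc : 0 < d i - c i := sub_pos.2 (hcd i)
  have hpartial : ∀ n, ∑ j ∈ range n, a i (j + m) ≤ C / (d i - c i) := by
    intro n
    rw [le_div_iff₀' hdc]
    refine le_trans (le_of_eq ?_) ((single_le_sum (fun j _ => mul_nonneg (sub_pos.2 (hcd j)).le
      (sum_nonneg fun t _ => ha j t)) (mem_univ i)).trans (hbound n))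
    rw [sum_Ico_eq_sum_range, Nat.add_sub_cancel_left]
    simp only [add_comm]
  exact (summable_nat_add_iff m).1 (summable_of_sum_range_le (fun j => ha i _) hpartial)

section Restr

variable {K : ℕ} (N : Finset (Fin K))

theorem restr_apply_of_mem {v : Fin K → ℝ} {j : Fin K} (hj : j ∈ N) : restr N v j = v j :=
  if_pos hj

theorem restr_sub (v w : Fin K → ℝ) : restr N v - restr N w = restr N (v - w) := by
  ext j
  by_cases hj : j ∈ N <;> simp [restr, hj]

theorem inner_restr_restr (u v : Fin K → ℝ) :
    ⟪restr N u, restr N v⟫ = ∑ j ∈ N, u j * v j := by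
  simp [restr, PiLp.inner_apply, mul_comm]

theorem norm_sq_restr (v : Fin K → ℝ) : ‖restr N v‖ ^ 2 = ∑ j ∈ N, v j ^ 2 := by
  rw [← real_inner_self_eq_norm_sq, inner_restr_restr]
  simp only [sq]

theorem gradient_apply_eq_zero_of_local {g : EuclideanSpace ℝ (Fin K) → ℝ}
    (hg : Differentiable ℝ g) (hloc : ∀ v w, (∀ j ∈ N, v j = w j) → g v = g w)
    (v : EuclideanSpace ℝ (Fin K)) {j : Fin K} (hj : j ∉ N) : gradient g v j = 0 := by
  set e := EuclideanSpace.single j (1 : ℝ)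
  have hconst : (fun s : ℝ => g (v + s • e)) = fun _ => g v :=
    funext fun s => hloc _ _ fun i hi => by simp [e, show i ≠ j from fun h => hj (h ▸ hi)]
  calc gradient g v j = fderiv ℝ g v e := by
        rw [← toDual_gradient, InnerProductSpace.toDual_apply_apply,
          EuclideanSpace.inner_single_right]
        simp
    _ = deriv (fun s : ℝ => g (v + s • e)) 0 := (hg v).lineDeriv_eq_fderiv.symm
    _ = 0 := by rw [hconst, deriv_const]

end Restr

noncomputable section

namespace ProxADMM

variable {K : ℕ} (P : ProxADMM K)

def zv (k : Fin K) (t : ℕ) : EuclideanSpace ℝ (Fin K) := restr (P.Nb k) (P.z t)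

def xv (k : Fin K) (t : ℕ) : EuclideanSpace ℝ (Fin K) := restr (P.Nb k) (P.x t k)

def yv (k : Fin K) (t : ℕ) : EuclideanSpace ℝ (Fin K) := restr (P.Nb k) (P.y t k)

def grad (k : Fin K) (t : ℕ) : EuclideanSpace ℝ (Fin K) := gradient (P.g k) (P.zv k t)

def dz (k : Fin K) (t : ℕ) : ℝ := ‖P.zv k (t + 1) - P.zv k t‖ ^ 2

def lagSeq (t : ℕ) : ℝ := P.Lag (P.x t) (P.z t) (P.y t)

theorem z_mem (t : ℕ) (j : Fin K) : P.z t j ∈ P.Xs j := by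
  induction t with
  | zero => exact P.z_init_mem j
  | succ t ih =>
    by_cases hj : j ∈ P.Sset t
    · exact P.z_update_mem t j hj
    · rwa [P.z_noupdate t j hj]

theorem sum_sum_Nb_comm (f : Fin K → Fin K → ℝ) :
    ∑ k, ∑ j ∈ P.Nb k, f k j = ∑ j, ∑ k ∈ P.Nb j, f k j :=
  sum_comm' fun k j => by simp [P.symm k j]

theorem xv_succ (t : ℕ) (k : Fin K) :
    P.xv k (t + 1) = P.zv k (t + 1) - (P.ρ k)⁻¹ • (P.grad k (P.τ t k) + P.yv k t) := by
  ext j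
  by_cases hj : j ∈ P.Nb k
  · simp [xv, zv, yv, grad, restr_apply_of_mem _ hj, P.x_update t k j hj, mul_add]
  · simp [xv, zv, yv, grad, restr, hj,
      gradient_apply_eq_zero_of_local _ (P.g_diff k) (P.g_local k) _ hj]

theorem yv_succ (t : ℕ) (k : Fin K) :
    P.yv k (t + 1) = P.yv k t + P.ρ k • (P.xv k (t + 1) - P.zv k (t + 1)) := by
  ext j
  by_cases hj : j ∈ P.Nb k
  · simp [xv, zv, yv, restr_apply_of_mem _ hj, P.y_update t k j hj]
  · simp [xv, zv, yv, restr, hj]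

theorem yv_succ_eq (t : ℕ) (k : Fin K) : P.yv k (t + 1) = -P.grad k (P.τ t k) := by
  rw [P.yv_succ, P.xv_succ, sub_sub_cancel_left, smul_neg, smul_inv_smul₀ (P.ρ_pos k).ne']
  abel

theorem xv_sub_zv_eq (t : ℕ) (k : Fin K) :
    P.xv k (t + 2) - P.zv k (t + 2)
      = -(P.ρ k)⁻¹ • (P.grad k (P.τ (t + 1) k) - P.grad k (P.τ t k)) := by
  rw [P.xv_succ, P.yv_succ_eq, sub_sub_cancel_left, ← sub_eq_add_neg, neg_smul]

theorem Lag_eq (t₁ t₂ t₃ : ℕ) :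
    P.Lag (P.x t₁) (P.z t₂) (P.y t₃) = ∑ k, (P.g k (P.xv k t₁) + P.h k (P.z t₂ k)
      + ⟪P.yv k t₃, P.xv k t₁ - P.zv k t₂⟫ + P.ρ k / 2 * ‖P.xv k t₁ - P.zv k t₂‖ ^ 2) := by
  refine sum_congr rfl fun k _ => ?_
  rw [xv, zv, yv, restr_sub, inner_restr_restr, norm_sq_restr, mul_sum, sum_add_distrib]
  simp only [Pi.sub_apply]
  ring

def zObj (t : ℕ) (j : Fin K) (w : ℝ) : ℝ :=
  P.h j w + ∑ k ∈ P.Nb j, (P.y t k j * (P.x t k j - w) + P.ρ k / 2 * (P.x t k j - w) ^ 2)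

theorem Lag_eq_sum_zObj (t : ℕ) (zz : Fin K → ℝ) :
    P.Lag (P.x t) zz (P.y t) = ∑ k, P.g k (P.xv k t) + ∑ j, P.zObj t j (zz j) := by
  calc P.Lag (P.x t) zz (P.y t) = ∑ k, P.g k (P.xv k t) + ∑ k, P.h k (zz k)
        + ∑ k, ∑ j ∈ P.Nb k,
          (P.y t k j * (P.x t k j - zz j) + P.ρ k / 2 * (P.x t k j - zz j) ^ 2) := by
        simp only [Lag, xv, ← sum_add_distrib]
    _ = _ := by
        rw [P.sum_sum_Nb_comm]
        simp only [zObj, sum_add_distrib]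
        ring

theorem strongConvexOn_zObj (t : ℕ) (j : Fin K) :
    StrongConvexOn (P.Xs j) (∑ k ∈ P.Nb j, P.ρ k) (P.zObj t j) := by
  rw [strongConvexOn_iff_convex]
  have hsplit : (fun w => P.zObj t j w - (∑ k ∈ P.Nb j, P.ρ k) / 2 * ‖w‖ ^ 2)
      = fun w => P.h j w + (LinearMap.mul ℝ ℝ (-∑ k ∈ P.Nb j, (P.y t k j + P.ρ k * P.x t k j)) w
        + ∑ k ∈ P.Nb j, (P.y t k j * P.x t k j + P.ρ k / 2 * P.x t k j ^ 2)) := by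
    funext w
    simp only [zObj, LinearMap.mul_apply', Real.norm_eq_abs, sq_abs, sum_div, sum_mul, neg_mul,
      ← sum_neg_distrib, add_sub_assoc, ← sum_sub_distrib, ← sum_add_distrib]
    exact congrArg _ (sum_congr rfl fun k _ => by ring)
  rw [hsplit]
  exact ((P.h_convex j).subset (Set.subset_univ _) (P.Xs_convex j)).add
    ((LinearMap.convexOn _ (P.Xs_convex j)).add_const _)

theorem zObj_succ_le (t : ℕ) (j : Fin K) :
    P.zObj t j (P.z (t + 1) j) + (∑ k ∈ P.Nb j, P.ρ k) / 2 * (P.z (t + 1) j - P.z t j) ^ 2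
      ≤ P.zObj t j (P.z t j) := by
  by_cases hj : j ∈ P.Sset t
  · have := (P.z_update_min t j hj).add_sq_le_of_strongConvexOn (P.strongConvexOn_zObj t j)
      (P.z_update_mem t j hj) (P.z_mem t j)
    rwa [Real.norm_eq_abs, sq_abs, ← neg_sub, neg_sq] at this
  · simp [P.z_noupdate t j hj]

theorem sum_mul_dz (t : ℕ) : ∑ k, P.ρ k / 2 * P.dz k t
    = ∑ j, (∑ k ∈ P.Nb j, P.ρ k) / 2 * (P.z (t + 1) j - P.z t j) ^ 2 := by
  simp only [dz, zv, restr_sub, norm_sq_restr, mul_sum, Pi.sub_apply]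
  rw [P.sum_sum_Nb_comm]
  simp only [sum_div, sum_mul]

theorem Lag_z_step (t : ℕ) :
    P.Lag (P.x t) (P.z (t + 1)) (P.y t) + ∑ k, P.ρ k / 2 * P.dz k t ≤ P.lagSeq t := by
  rw [lagSeq, P.Lag_eq_sum_zObj, P.Lag_eq_sum_zObj, P.sum_mul_dz, add_assoc, ← sum_add_distrib]
  gcongr with j
  exact P.zObj_succ_le t j

theorem Lag_x_step (t : ℕ) (hρ : ∀ k, 4 * P.L k < P.ρ k) :
    P.Lag (P.x (t + 1)) (P.z (t + 1)) (P.y t)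
      ≤ P.Lag (P.x t) (P.z (t + 1)) (P.y t) + ∑ k,
        (‖P.grad k (t + 1) - P.grad k (P.τ t k)‖ ^ 2 / (2 * (P.ρ k - 4 * P.L k))
          + 3 * P.L k * ‖P.xv k (t + 1) - P.zv k (t + 1)‖ ^ 2) := by
  rw [P.Lag_eq, P.Lag_eq, ← sum_add_distrib]
  refine sum_le_sum fun k _ => ?_
  have := prox_step_le (P.g_diff k) (P.L_pos k).le (P.g_grad_lip k) (hρ k) (b := P.xv k t)
    (P.xv_succ t k)
  rw [← grad] at this
  linarith

theorem Lag_y_step (t : ℕ) :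
    P.lagSeq (t + 1) = P.Lag (P.x (t + 1)) (P.z (t + 1)) (P.y t)
      + ∑ k, P.ρ k * ‖P.xv k (t + 1) - P.zv k (t + 1)‖ ^ 2 := by
  rw [lagSeq, P.Lag_eq, P.Lag_eq, ← sum_add_distrib]
  refine sum_congr rfl fun k _ => ?_
  rw [P.yv_succ, inner_add_left, real_inner_smul_left, real_inner_self_eq_norm_sq]
  ring

theorem dz_nonneg (k : Fin K) (t : ℕ) : 0 ≤ P.dz k t := sq_nonneg _

theorem norm_grad_sub_sq_le (k : Fin K) (a b : ℕ) :
    ‖P.grad k a - P.grad k b‖ ^ 2 ≤ P.L k ^ 2 * ‖P.zv k a - P.zv k b‖ ^ 2 := by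
  rw [← mul_pow]
  exact pow_le_pow_left₀ (norm_nonneg _) (P.g_grad_lip k _ _) 2

theorem norm_grad_delay_sq_le (t : ℕ) (k : Fin K) :
    ‖P.grad k (t + 1) - P.grad k (P.τ t k)‖ ^ 2
      ≤ P.L k ^ 2 * (P.Td k * ∑ s ∈ Ico (t + 1 - P.Td k) (t + 1), P.dz k s) :=
  (P.norm_grad_sub_sq_le k _ _).trans <| mul_le_mul_of_nonneg_left
    (norm_sub_sq_le_mul_sum_window _ le_rfl (by omega) (P.τ_le t k) (P.τ_ge t k)) (sq_nonneg _)

theorem norm_grad_delay_sub_sq_le (t : ℕ) (k : Fin K) :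
    ‖P.grad k (P.τ (t + 1) k) - P.grad k (P.τ t k)‖ ^ 2
      ≤ P.L k ^ 2 * ((P.Td k + 1) * ∑ s ∈ Ico (t + 2 - (P.Td k + 1)) (t + 2), P.dz k s) := by
  have hwin := norm_sub_sq_le_mul_sum_window (P.zv k) (a := P.τ (t + 1) k) (b := P.τ t k)
    (u := t + 2) (w := P.Td k + 1) (P.τ_le (t + 1) k) (by have := P.τ_ge (t + 1) k; omega)
    (by have := P.τ_le t k; omega) (by have := P.τ_ge t k; omega)
  rw [Nat.cast_add_one] at hwin
  exact (P.norm_grad_sub_sq_le k _ _).trans (mul_le_mul_of_nonneg_left hwin (sq_nonneg _))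

theorem norm_xv_sub_zv_sq_le (t : ℕ) (k : Fin K) :
    ‖P.xv k (t + 2) - P.zv k (t + 2)‖ ^ 2
      ≤ (P.L k / P.ρ k) ^ 2
        * ((P.Td k + 1) * ∑ s ∈ Ico (t + 2 - (P.Td k + 1)) (t + 2), P.dz k s) := by
  rw [P.xv_sub_zv_eq, norm_smul, norm_neg, norm_inv, Real.norm_of_nonneg (P.ρ_pos k).le, mul_pow,
    div_pow, div_eq_inv_mul, inv_pow, mul_assoc]
  exact mul_le_mul_of_nonneg_left (P.norm_grad_delay_sub_sq_le t k) (by positivity)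

-- (A3) reads `α_k = ρ_k f_k / 2 - |N_k| * delayCoeff k`.
def delayCoeff (k : Fin K) : ℝ :=
  P.L k * P.Td k ^ 2 / 2 + (7 * P.L k / (2 * P.ρ k ^ 2) + 1 / P.ρ k) * P.L k ^ 2 * (P.Td k + 1) ^ 2

def delayErr (k : Fin K) (t : ℕ) : ℝ :=
  P.L k * P.Td k / 2 * ∑ s ∈ Ico (t + 1 - P.Td k) (t + 1), P.dz k s
    + (7 * P.L k / (2 * P.ρ k ^ 2) + 1 / P.ρ k) * P.L k ^ 2 * (P.Td k + 1)
      * ∑ s ∈ Ico (t + 1 - (P.Td k + 1)) (t + 1), P.dz k s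

theorem error_le_delayErr (h5 : ∀ k, 5 * P.L k ≤ P.ρ k) (t : ℕ) (k : Fin K) :
    ‖P.grad k (t + 2) - P.grad k (P.τ (t + 1) k)‖ ^ 2 / (2 * (P.ρ k - 4 * P.L k))
      + (3 * P.L k + P.ρ k) * ‖P.xv k (t + 2) - P.zv k (t + 2)‖ ^ 2 ≤ P.delayErr k (t + 1) := by
  have hL := P.L_pos k
  have hρ := P.ρ_pos k
  have h5k := h5 k
  set W₁ := ∑ s ∈ Ico (t + 2 - P.Td k) (t + 2), P.dz k s
  set W₂ := ∑ s ∈ Ico (t + 2 - (P.Td k + 1)) (t + 2), P.dz k s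
  have hW₁ : 0 ≤ P.Td k * W₁ := mul_nonneg (by positivity) (sum_nonneg fun s _ => P.dz_nonneg k s)
  have hW₂ : 0 ≤ (P.Td k + 1) * W₂ :=
    mul_nonneg (by positivity) (sum_nonneg fun s _ => P.dz_nonneg k s)
  -- `5 L ≤ ρ` gives `L / (ρ - 4 L) ≤ 1`
  have hgrad : ‖P.grad k (t + 2) - P.grad k (P.τ (t + 1) k)‖ ^ 2 / (2 * (P.ρ k - 4 * P.L k))
      ≤ P.L k / 2 * (P.Td k * W₁) := by
    rw [div_le_iff₀ (by linarith)]
    nlinarith [P.norm_grad_delay_sq_le (t + 1) k, mul_nonneg hL.le hW₁]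
  have hcoeff : (3 * P.L k + P.ρ k) * (P.L k / P.ρ k) ^ 2
      ≤ (7 * P.L k / (2 * P.ρ k ^ 2) + 1 / P.ρ k) * P.L k ^ 2 := by
    rw [div_pow, mul_div_assoc', div_le_iff₀ (by positivity)]
    field_simp
    nlinarith [pow_pos hL 3, pow_pos hρ 2]
  have hresid := mul_le_mul_of_nonneg_left (P.norm_xv_sub_zv_sq_le t k)
    (by positivity : 0 ≤ 3 * P.L k + P.ρ k)
  have := mul_le_mul_of_nonneg_right hcoeff hW₂
  rw [delayErr]
  nlinarith

theorem lagSeq_descent (h5 : ∀ k, 5 * P.L k ≤ P.ρ k) (t : ℕ) :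
    P.lagSeq (t + 2) + ∑ k, P.ρ k / 2 * P.dz k (t + 1)
      ≤ P.lagSeq (t + 1) + ∑ k, P.delayErr k (t + 1) := by
  have hy := P.Lag_y_step (t + 1)
  have hx := P.Lag_x_step (t + 1) fun k => by linarith [h5 k, P.L_pos k]
  have hz := P.Lag_z_step (t + 1)
  have herr := sum_le_sum fun k (_ : k ∈ univ) => P.error_le_delayErr h5 t k
  simp only [add_mul, sum_add_distrib] at hx herr ⊢
  linarith

theorem sum_delayErr_le (k : Fin K) {m : ℕ} (hm : P.Td k ≤ m) (N : ℕ) :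
    ∑ t ∈ Ico m N, P.delayErr k t ≤ P.delayCoeff k * ∑ s ∈ range N, P.dz k s := by
  have hL := P.L_pos k
  have hρ := P.ρ_pos k
  have h₁ := sum_Ico_sum_window_le (P.dz_nonneg k) (w := P.Td k) (m := m) (by omega) N
  have h₂ := sum_Ico_sum_window_le (P.dz_nonneg k) (w := P.Td k + 1) (m := m) (by omega) N
  rw [Nat.cast_add_one] at h₂
  simp only [delayErr, sum_add_distrib, ← mul_sum]
  calc _ ≤ P.L k * P.Td k / 2 * (P.Td k * ∑ s ∈ range N, P.dz k s)
        + (7 * P.L k / (2 * P.ρ k ^ 2) + 1 / P.ρ k) * P.L k ^ 2 * (P.Td k + 1)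
          * ((P.Td k + 1) * ∑ s ∈ range N, P.dz k s) := by gcongr
    _ = P.delayCoeff k * ∑ s ∈ range N, P.dz k s := by rw [delayCoeff]; ring

theorem delayCoeff_lt_half_rho (k : Fin K)
    (h : 0 < P.ρ k * P.freq k / 2
      - (7 * P.L k / (2 * P.ρ k ^ 2) + 1 / P.ρ k) * ((P.Nb k).card : ℝ) * P.L k ^ 2
          * ((P.Td k : ℝ) + 1) ^ 2
      - ((P.Nb k).card : ℝ) * P.L k * (P.Td k : ℝ) ^ 2 / 2) :
    P.delayCoeff k < P.ρ k / 2 := by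
  have hL := P.L_pos k
  have hρ := P.ρ_pos k
  have hcard : (1 : ℝ) ≤ #(P.Nb k) := by exact_mod_cast card_pos.2 ⟨k, P.self_mem k⟩
  have hfreq : P.ρ k * P.freq k ≤ P.ρ k := mul_le_of_le_one_right hρ.le (P.freq_le_one k)
  have hcoeff : 0 ≤ P.delayCoeff k := by rw [delayCoeff]; positivity
  have hexpr : P.ρ k * P.freq k / 2
      - (7 * P.L k / (2 * P.ρ k ^ 2) + 1 / P.ρ k) * ((P.Nb k).card : ℝ) * P.L k ^ 2
          * ((P.Td k : ℝ) + 1) ^ 2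
      - ((P.Nb k).card : ℝ) * P.L k * (P.Td k : ℝ) ^ 2 / 2
      = P.ρ k * P.freq k / 2 - #(P.Nb k) * P.delayCoeff k := by rw [delayCoeff]; ring
  nlinarith

theorem exists_norm_zv_sub_sq_le : ∃ D, ∀ k a b, ‖P.zv k a - P.zv k b‖ ^ 2 ≤ D := by
  choose C hC using fun j => Metric.isBounded_iff.1 (P.Xs_compact j).isBounded
  refine ⟨∑ j, C j ^ 2, fun k a b => ?_⟩
  rw [zv, zv, restr_sub, norm_sq_restr]
  refine (sum_le_sum_of_subset_of_nonneg (subset_univ _) fun _ _ _ => sq_nonneg _).trans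
    (sum_le_sum fun j _ => ?_)
  rw [Pi.sub_apply, ← sq_abs, ← Real.dist_eq]
  exact pow_le_pow_left₀ dist_nonneg (hC j (P.z_mem a j) (P.z_mem b j)) 2

theorem exists_le_h (k : Fin K) : ∃ c, ∀ w ∈ P.Xs k, c ≤ P.h k w := by
  obtain ⟨w₀, -, hmin⟩ := (P.Xs_compact k).exists_isMinOn (P.Xs_nonempty k)
    (((P.h_convex k).continuousOn isOpen_univ).mono (Set.subset_univ _))
  exact ⟨P.h k w₀, fun w hw => hmin hw⟩

theorem lagSeq_bddBelow (h2 : ∀ k, 2 * P.L k < P.ρ k) : BddBelow (Set.range P.lagSeq) := by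
  obtain ⟨D, hD⟩ := P.exists_norm_zv_sub_sq_le
  choose bh hbh using P.exists_le_h
  choose bg hbg using P.g_bddBelow
  have hsucc : ∀ t, ∑ k, (bg k + bh k - P.L k ^ 2 * D / (2 * (P.ρ k - 2 * P.L k)))
      ≤ P.lagSeq (t + 1) := by
    intro t
    rw [lagSeq, Lag_eq]
    refine sum_le_sum fun k _ => ?_
    have hlow := sub_sq_div_le_sub_inner_add_sq (P.g_diff k) (P.L_pos k).le (P.g_grad_lip k)
      (h2 k) (P.xv k (t + 1)) (P.zv k (t + 1)) (P.grad k (P.τ t k))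
    have hgrad : ‖P.grad k (t + 1) - P.grad k (P.τ t k)‖ ^ 2 / (2 * (P.ρ k - 2 * P.L k))
        ≤ P.L k ^ 2 * D / (2 * (P.ρ k - 2 * P.L k)) :=
      div_le_div_of_nonneg_right ((P.norm_grad_sub_sq_le k _ _).trans
        (mul_le_mul_of_nonneg_left (hD k _ _) (sq_nonneg _))) (by linarith [h2 k])
    rw [← grad] at hlow
    have hg : bg k ≤ P.g k (P.zv k (t + 1)) := hbg k _ (P.z_mem (t + 1))
    rw [P.yv_succ_eq, inner_neg_left]
    linarith [hbh k _ (P.z_mem (t + 1) k)]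
  refine ⟨min (P.lagSeq 0) (∑ k, (bg k + bh k - P.L k ^ 2 * D / (2 * (P.ρ k - 2 * P.L k)))), ?_⟩
  rintro _ ⟨t, rfl⟩
  cases t with
  | zero => exact min_le_left _ _
  | succ t => exact (min_le_right _ _).trans (hsucc t)

section Convergence

variable (h5 : ∀ k, 5 * P.L k ≤ P.ρ k) (hc : ∀ k, P.delayCoeff k < P.ρ k / 2)
include h5 hc

theorem summable_dz (k : Fin K) : Summable (P.dz k) := by
  have hm : ∀ k, P.Td k ≤ ∑ k, P.Td k + 1 := fun k =>
    (single_le_sum (fun k _ => Nat.zero_le (P.Td k)) (mem_univ k)).trans (Nat.le_succ _)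
  refine summable_of_descent_of_sum_le (P.lagSeq_bddBelow fun k => by linarith [h5 k, P.L_pos k])
    P.dz_nonneg hc (fun t ht => ?_) (fun k N => P.sum_delayErr_le k (hm k) N) k
  obtain ⟨s, rfl⟩ : ∃ s, t = s + 1 := ⟨t - 1, by omega⟩
  exact P.lagSeq_descent h5 s

theorem tendsto_norm_zv_succ_sub (k : Fin K) :
    Tendsto (fun t => ‖P.zv k (t + 1) - P.zv k t‖) atTop (𝓝 0) := by
  simpa [dz, Real.sqrt_sq (norm_nonneg _)] using (P.summable_dz h5 hc k).tendsto_atTop_zero.sqrt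

theorem tendsto_norm_grad_delay_sub (k : Fin K) :
    Tendsto (fun t => ‖P.grad k (P.τ (t + 1) k) - P.grad k (P.τ t k)‖) atTop (𝓝 0) := by
  have hwin := ((tendsto_sum_window (P.summable_dz h5 hc k).tendsto_atTop_zero (P.Td k + 1)).comp
    (tendsto_add_atTop_nat 1)).const_mul (P.L k ^ 2 * (P.Td k + 1))
  have hsq : Tendsto (fun t => ‖P.grad k (P.τ (t + 1) k) - P.grad k (P.τ t k)‖ ^ 2) atTop (𝓝 0) :=
    squeeze_zero (fun _ => sq_nonneg _)
      (fun t => (P.norm_grad_delay_sub_sq_le t k).trans_eq (mul_assoc _ _ _).symm)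
      (by simpa using hwin)
  simpa [Real.sqrt_sq (norm_nonneg _)] using hsq.sqrt

theorem tendsto_norm_xv_sub_zv (k : Fin K) :
    Tendsto (fun t => ‖P.xv k t - P.zv k t‖) atTop (𝓝 0) := by
  rw [← tendsto_add_atTop_iff_nat 2]
  have hnorm : ∀ t, ‖P.xv k (t + 2) - P.zv k (t + 2)‖
      = (P.ρ k)⁻¹ * ‖P.grad k (P.τ (t + 1) k) - P.grad k (P.τ t k)‖ := fun t => by
    rw [P.xv_sub_zv_eq, norm_smul, norm_neg, norm_inv, Real.norm_of_nonneg (P.ρ_pos k).le]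
  simpa only [hnorm, mul_zero] using (P.tendsto_norm_grad_delay_sub h5 hc k).const_mul _

theorem tendsto_norm_yv_succ_sub (k : Fin K) :
    Tendsto (fun t => ‖P.yv k (t + 1) - P.yv k t‖) atTop (𝓝 0) := by
  rw [← tendsto_add_atTop_iff_nat 1]
  simpa only [P.yv_succ_eq, neg_sub_neg, norm_sub_rev] using P.tendsto_norm_grad_delay_sub h5 hc k

theorem tendsto_norm_xv_succ_sub (k : Fin K) :
    Tendsto (fun t => ‖P.xv k (t + 1) - P.xv k t‖) atTop (𝓝 0) := by
  have hr := P.tendsto_norm_xv_sub_zv h5 hc k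
  refine squeeze_zero (fun _ => norm_nonneg _) (fun t => ?_)
    (by simpa using ((P.tendsto_norm_zv_succ_sub h5 hc k).add
      (hr.comp (tendsto_add_atTop_nat 1))).add hr)
  calc ‖P.xv k (t + 1) - P.xv k t‖
      = ‖(P.zv k (t + 1) - P.zv k t) + (P.xv k (t + 1) - P.zv k (t + 1))
          - (P.xv k t - P.zv k t)‖ := by congr 1; abel
    _ ≤ ‖P.zv k (t + 1) - P.zv k t‖ + ‖P.xv k (t + 1) - P.zv k (t + 1)‖
          + ‖P.xv k t - P.zv k t‖ := (norm_sub_le _ _).trans (by gcongr; exact norm_add_le _ _)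

end Convergence

end ProxADMM

end

/-- **Theorem 1(a)** (asynchronous proximal ADMM, assumptions (A1)-(A3)):
successive differences of all iterates vanish, and asymptotic consensus
`x_{kj}^t - z_j^t → 0` holds. -/
theorem prox_admm_iterates_converge {K : ℕ} (P : ProxADMM K)
    (α β : Fin K → ℝ)
    (hα : ∀ k, α k = P.ρ k * P.freq k / 2
      - (7 * P.L k / (2 * P.ρ k ^ 2) + 1 / P.ρ k) * ((P.Nb k).card : ℝ) * P.L k ^ 2
          * ((P.Td k : ℝ) + 1) ^ 2
      - ((P.Nb k).card : ℝ) * P.L k * (P.Td k : ℝ) ^ 2 / 2)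
    (hβ : ∀ k, β k = P.ρ k - 7 * P.L k)
    (hA3 : ∀ k, 0 < α k ∧ 0 < β k) :
    (∀ k : Fin K, Tendsto (fun t => ‖P.z (t + 1) k - P.z t k‖) atTop (𝓝 0)) ∧
    (∀ k : Fin K, ∀ j ∈ P.Nb k,
      Tendsto (fun t => ‖P.x (t + 1) k j - P.x t k j‖) atTop (𝓝 0)) ∧
    (∀ k : Fin K, ∀ j ∈ P.Nb k,
      Tendsto (fun t => ‖P.y (t + 1) k j - P.y t k j‖) atTop (𝓝 0)) ∧
    (∀ k : Fin K, ∀ j ∈ P.Nb k,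
      Tendsto (fun t => ‖P.x t k j - P.z t j‖) atTop (𝓝 0)) := by
  have h5 : ∀ k, 5 * P.L k ≤ P.ρ k := fun k => by
    have := (hA3 k).2
    rw [hβ k] at this
    linarith [P.L_pos k]
  have hc : ∀ k, P.delayCoeff k < P.ρ k / 2 := fun k =>
    P.delayCoeff_lt_half_rho k (hα k ▸ (hA3 k).1)
  refine ⟨fun k => ?_, fun k j hj => ?_, fun k j hj => ?_, fun k j hj => ?_⟩
  · simpa [ProxADMM.zv, restr_apply_of_mem _ (P.self_mem k)]
      using tendsto_norm_apply (P.tendsto_norm_zv_succ_sub h5 hc k) k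
  · simpa [ProxADMM.xv, restr_apply_of_mem _ hj]
      using tendsto_norm_apply (P.tendsto_norm_xv_succ_sub h5 hc k) j
  · simpa [ProxADMM.yv, restr_apply_of_mem _ hj]
      using tendsto_norm_apply (P.tendsto_norm_yv_succ_sub h5 hc k) j
  · simpa [ProxADMM.xv, ProxADMM.zv, restr_apply_of_mem _ hj]
      using tendsto_norm_apply (P.tendsto_norm_xv_sub_zv h5 hc k) j
end

section
/- Delayed-gradient dual difference bound: let g : ℝ^n → ℝ be differentiable with L-Lipschitz gradient, let T ∈ ℕ, let (z^t)_{t∈ℤ} be a sequence in ℝ^n, and for each t let [t] be a delayed index with t − T ≤ [t] ≤ t. Define y^t := −∇g(z^{[t]}). Then for every t, ‖y^{t+1} − y^t‖² ≤ L²(T+1) Σ_{d=0}^{T} ‖z^{t+1−d} − z^{t−d}‖². -/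
open Filter Topology

private lemma telescope' {n : ℕ} (z : ℤ → EuclideanSpace ℝ (Fin n)) (a : ℤ) :
    ∀ m : ℕ, ‖z (a + m) - z a‖ ≤ ∑ k ∈ Finset.range m, ‖z (a + k + 1) - z (a + k)‖ := by
  intro m
  induction m with
  | zero => simp
  | succ m ih =>
    rw [Finset.sum_range_succ]
    have h : z (a + (m + 1 : ℕ)) - z a = (z (a + m + 1) - z (a + m)) + (z (a + m) - z a) := by
      push_cast; ring_nf; abel
    rw [h]
    calc _ ≤ ‖z (a + m + 1) - z (a + m)‖ + ‖z (a + (m : ℤ)) - z a‖ := norm_add_le _ _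
      _ ≤ _ := by linarith [ih]

/-- Delayed-gradient dual difference bound: if `g` has an `L`-Lipschitz
gradient, the delayed indices satisfy `t − T ≤ [t] ≤ t`, and
`y^t := −∇g(z^{[t]})`, then
`‖y^{t+1} − y^t‖² ≤ L²(T+1) Σ_{d=0}^{T} ‖z^{t+1−d} − z^{t−d}‖²`. -/
theorem delayed_gradient_dual_difference_bound {n : ℕ}
    (g : EuclideanSpace ℝ (Fin n) → ℝ) (L : ℝ)
    (hg : Differentiable ℝ g)
    (hlip : ∀ v w, ‖gradient g v - gradient g w‖ ≤ L * ‖v - w‖)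
    (T : ℕ) (z : ℤ → EuclideanSpace ℝ (Fin n)) (τ : ℤ → ℤ)
    (hτ_ge : ∀ t, t - (T : ℤ) ≤ τ t) (hτ_le : ∀ t, τ t ≤ t)
    (y : ℤ → EuclideanSpace ℝ (Fin n))
    (hy : ∀ t, y t = - gradient g (z (τ t)))
    (t : ℤ) :
    ‖y (t + 1) - y t‖ ^ 2
      ≤ L ^ 2 * ((T : ℝ) + 1) *
          ∑ d ∈ Finset.range (T + 1), ‖z (t + 1 - (d : ℤ)) - z (t - (d : ℤ))‖ ^ 2 := by
  set S := ∑ d ∈ Finset.range (T + 1), ‖z (t + 1 - (d : ℤ)) - z (t - (d : ℤ))‖ with hS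
  -- key : any two z-values at indices in [t-T, t+1] are S-close
  have key : ∀ p q : ℤ, t - T ≤ p → p ≤ q → q ≤ t + 1 → ‖z q - z p‖ ≤ S := by
    intro p q hp hpq hq
    set m := (q - p).toNat with hm
    have hqm : q = p + m := by omega
    rw [hqm]
    refine (telescope' z p m).trans ?_
    set e : ℕ → ℕ := fun k => (t - (p + k)).toNat with he
    have hinj : ∀ x ∈ Finset.range m, ∀ y ∈ Finset.range m, e x = e y → x = y := by
      intro x hx y hy hxy
      simp only [Finset.mem_range] at hx hy
      simp only [he] at hxy
      omega
    have hre : ∀ k ∈ Finset.range m,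
        ‖z (p + k + 1) - z (p + k)‖
          = (fun d : ℕ => ‖z (t + 1 - (d : ℤ)) - z (t - (d : ℤ))‖) (e k) := by
      intro k hk
      simp only [Finset.mem_range] at hk
      have h1 : (t + 1 - ((e k : ℕ) : ℤ)) = p + k + 1 := by simp only [he]; omega
      have h2 : (t - ((e k : ℕ) : ℤ)) = p + k := by simp only [he]; omega
      show _ = ‖z (t + 1 - ((e k : ℕ) : ℤ)) - z (t - ((e k : ℕ) : ℤ))‖
      rw [h1, h2]
    rw [Finset.sum_congr rfl hre]
    calc ∑ k ∈ Finset.range m, (fun d : ℕ => ‖z (t + 1 - (d : ℤ)) - z (t - (d : ℤ))‖) (e k)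
        = ∑ d ∈ (Finset.range m).image e, ‖z (t + 1 - (d : ℤ)) - z (t - (d : ℤ))‖ :=
          (Finset.sum_image (f := fun d : ℕ => ‖z (t + 1 - (d : ℤ)) - z (t - (d : ℤ))‖) hinj).symm
      _ ≤ S := by
          apply Finset.sum_le_sum_of_subset_of_nonneg
          · intro d hd
            simp only [Finset.mem_image, Finset.mem_range] at hd ⊢
            obtain ⟨k, hk, rfl⟩ := hd
            simp only [he]
            omega
          · intro i _ _; positivity
  have h2 : ‖z (τ (t + 1)) - z (τ t)‖ ≤ S := by
    rcases le_total (τ t) (τ (t + 1)) with h | h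
    · exact key _ _ (hτ_ge t) h (hτ_le (t + 1))
    · rw [norm_sub_rev]
      have := hτ_ge (t + 1)
      exact key _ _ (by omega) h ((hτ_le t).trans (by omega))
  have h1 : ‖y (t + 1) - y t‖ ≤ L * ‖z (τ (t + 1)) - z (τ t)‖ := by
    rw [hy, hy]
    calc ‖-gradient g (z (τ (t + 1))) - -gradient g (z (τ t))‖
        = ‖gradient g (z (τ (t + 1))) - gradient g (z (τ t))‖ := by
          rw [show -gradient g (z (τ (t + 1))) - -gradient g (z (τ t))
              = -(gradient g (z (τ (t + 1))) - gradient g (z (τ t))) from by abel, norm_neg]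
      _ ≤ L * ‖z (τ (t + 1)) - z (τ t)‖ := hlip _ _
  have hS0 : (0:ℝ) ≤ S := Finset.sum_nonneg fun i _ => norm_nonneg _
  have h3 : ‖y (t + 1) - y t‖ ≤ |L| * S :=
    h1.trans <| (mul_le_mul_of_nonneg_right (le_abs_self L) (norm_nonneg _)).trans
      (mul_le_mul_of_nonneg_left h2 (abs_nonneg L))
  have h4 : ‖y (t + 1) - y t‖ ^ 2 ≤ (|L| * S) ^ 2 :=
    pow_le_pow_left₀ (norm_nonneg _) h3 2
  have h6 : S ^ 2 ≤ ((T : ℝ) + 1) *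
      ∑ d ∈ Finset.range (T + 1), ‖z (t + 1 - (d : ℤ)) - z (t - (d : ℤ))‖ ^ 2 := by
    have := sq_sum_le_card_mul_sum_sq (s := Finset.range (T + 1))
      (f := fun d : ℕ => ‖z (t + 1 - (d : ℤ)) - z (t - (d : ℤ))‖)
    simpa [hS] using this
  calc ‖y (t + 1) - y t‖ ^ 2 ≤ (|L| * S) ^ 2 := h4
    _ = L ^ 2 * S ^ 2 := by rw [mul_pow, sq_abs]
    _ ≤ _ := by
        rw [mul_assoc]
        exact mul_le_mul_of_nonneg_left h6 (sq_nonneg L)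
end
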